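/- arXiv:1801.07609 — 3 statements merged into one kernel-verified Lean document; each statement's English description precedes it below -/
import Mathlib

section
/- For all x, y in ℝⁿ, d_h(x,y) ≤ d_h(x,0) + d_h(0,y), with equality if and only if x = t·y or y = t·x for some real t ≤ 0. -/
/-!
With `a = arsinh ‖x‖` and `b = arsinh ‖y‖` one has `[x] = cosh a`, `‖x‖ = sinh a` (likewise for
`y`), `d_h(x,0) = a` and `d_h(0,y) = b`. The addition formula gives
`cosh (a + b) = [x][y] + ‖x‖‖y‖ ≥ [x][y] - ⟨x,y⟩ = cosh (d_h(x,y))`, and `arcosh` is strictly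
increasing, so equality holds iff `⟨x,y⟩ = -‖x‖‖y‖`: the equality case of Cauchy–Schwarz for
`x` and `-y`.
-/

noncomputable def arcosh (t : ℝ) : ℝ := Real.log (t + Real.sqrt (t ^ 2 - 1))

noncomputable def br {n : ℕ} (x : EuclideanSpace ℝ (Fin n)) : ℝ :=
  Real.sqrt (1 + ‖x‖ ^ 2)

noncomputable def dh {n : ℕ} (x y : EuclideanSpace ℝ (Fin n)) : ℝ :=
  arcosh (br x * br y - inner ℝ x y)

noncomputable def T {n : ℕ} (y x : EuclideanSpace ℝ (Fin n)) : EuclideanSpace ℝ (Fin n) :=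
  x + (br x + inner ℝ x y / (br y + 1)) • y

section InnerProductSpace

variable {F : Type*} [NormedAddCommGroup F] [InnerProductSpace ℝ F]

theorem real_inner_eq_neg_norm_mul_norm_iff {x y : F} :
    inner ℝ x y = -(‖x‖ * ‖y‖) ↔ ∃ t : ℝ, t ≤ 0 ∧ (x = t • y ∨ y = t • x) := by
  have hneg : inner ℝ x y = -(‖x‖ * ‖y‖) ↔ ‖y‖ • x + ‖x‖ • y = 0 := by
    rw [← neg_eq_iff_eq_neg, ← inner_neg_right, ← norm_neg y, inner_eq_norm_mul_iff_real,
      norm_neg, smul_neg, ← add_eq_zero_iff_eq_neg]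
  rw [hneg]
  constructor
  · intro h
    rcases eq_or_ne y 0 with rfl | hy
    · exact ⟨0, le_rfl, Or.inr (zero_smul ℝ x).symm⟩
    · have hy' : ‖y‖ ≠ 0 := norm_ne_zero_iff.mpr hy
      refine ⟨-(‖x‖ / ‖y‖), neg_nonpos.mpr (by positivity), Or.inl ?_⟩
      rw [neg_smul, eq_neg_iff_add_eq_zero, ← smul_right_inj hy', smul_add, smul_smul,
        mul_div_cancel₀ _ hy', h, smul_zero]
  · rintro ⟨t, ht, rfl | rfl⟩
    · rw [norm_smul, Real.norm_of_nonpos ht, smul_smul, ← add_smul,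
        show ‖y‖ * t + -t * ‖y‖ = 0 by ring, zero_smul]
    · rw [norm_smul, Real.norm_of_nonpos ht, smul_smul, ← add_smul,
        show -t * ‖x‖ + ‖x‖ * t = 0 by ring, zero_smul]

end InnerProductSpace

section HyperbolicDistance

variable {n : ℕ} (x y : EuclideanSpace ℝ (Fin n))

theorem arcosh_eq_real_arcosh : arcosh = Real.arcosh := rfl

theorem br_eq_cosh_arsinh : br x = Real.cosh (Real.arsinh ‖x‖) := (Real.cosh_arsinh ‖x‖).symm

theorem br_zero : br (0 : EuclideanSpace ℝ (Fin n)) = 1 := by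
  simp [br]

theorem norm_lt_br : ‖x‖ < br x := by
  rw [br, Real.lt_sqrt (norm_nonneg x)]
  linarith

theorem dh_zero_right : dh x 0 = Real.arsinh ‖x‖ := by
  rw [dh, br_zero, mul_one, inner_zero_right, sub_zero, br_eq_cosh_arsinh, arcosh_eq_real_arcosh,
    Real.arcosh_cosh (Real.arsinh_nonneg_iff.mpr (norm_nonneg x))]

theorem dh_zero_left : dh 0 y = Real.arsinh ‖y‖ := by
  rw [dh, br_zero, one_mul, inner_zero_left, sub_zero, br_eq_cosh_arsinh, arcosh_eq_real_arcosh,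
    Real.arcosh_cosh (Real.arsinh_nonneg_iff.mpr (norm_nonneg y))]

theorem dh_zero_add_dh_zero : dh x 0 + dh 0 y = arcosh (br x * br y + ‖x‖ * ‖y‖) := by
  have hnonneg : 0 ≤ Real.arsinh ‖x‖ + Real.arsinh ‖y‖ :=
    add_nonneg (Real.arsinh_nonneg_iff.mpr (norm_nonneg x))
      (Real.arsinh_nonneg_iff.mpr (norm_nonneg y))
  rw [dh_zero_right, dh_zero_left, br_eq_cosh_arsinh, br_eq_cosh_arsinh,
    ← Real.sinh_arsinh ‖x‖, ← Real.sinh_arsinh ‖y‖, Real.arsinh_sinh, Real.arsinh_sinh,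
    ← Real.cosh_add, arcosh_eq_real_arcosh, Real.arcosh_cosh hnonneg]

theorem br_mul_br_sub_inner_pos : 0 < br x * br y - inner ℝ x y := by
  have hlt : ‖x‖ * ‖y‖ < br x * br y :=
    mul_lt_mul'' (norm_lt_br x) (norm_lt_br y) (norm_nonneg x) (norm_nonneg y)
  linarith [real_inner_le_norm x y]

theorem br_mul_br_sub_inner_le : br x * br y - inner ℝ x y ≤ br x * br y + ‖x‖ * ‖y‖ := by
  have h := real_inner_le_norm x (-y)
  rw [inner_neg_right, norm_neg] at h
  linarith

theorem dh_le_dh_zero_add_dh_zero : dh x y ≤ dh x 0 + dh 0 y := by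
  have hpos := br_mul_br_sub_inner_pos x y
  have hle := br_mul_br_sub_inner_le x y
  rw [dh_zero_add_dh_zero, dh, arcosh_eq_real_arcosh]
  exact (Real.arcosh_le_arcosh hpos (hpos.trans_le hle)).mpr hle

theorem dh_eq_dh_zero_add_dh_zero_iff :
    dh x y = dh x 0 + dh 0 y ↔ inner ℝ x y = -(‖x‖ * ‖y‖) := by
  have hpos := br_mul_br_sub_inner_pos x y
  rw [dh_zero_add_dh_zero, dh, arcosh_eq_real_arcosh,
    Real.strictMonoOn_arcosh.injOn.eq_iff hpos (hpos.trans_le (br_mul_br_sub_inner_le x y)),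
    sub_eq_add_neg, add_right_inj, neg_eq_iff_eq_neg]

end HyperbolicDistance

theorem dh_tri_through_zero {n : ℕ} (x y : EuclideanSpace ℝ (Fin n)) :
    dh x y ≤ dh x 0 + dh 0 y ∧
    (dh x y = dh x 0 + dh 0 y ↔ ∃ t : ℝ, t ≤ 0 ∧ (x = t • y ∨ y = t • x)) :=
  ⟨dh_le_dh_zero_add_dh_zero x y,
    (dh_eq_dh_zero_add_dh_zero_iff x y).trans real_inner_eq_neg_norm_mul_norm_iff⟩
end

section
/- For any y ∈ ℝⁿ and all a, b ∈ ℝⁿ, d_h(T_y(a), T_y(b)) = d_h(a,b), i.e., the hyperbolic translation T_y preserves the hyperbolic distance. -/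
/-!
Lifting `x` to the point `(br x, x)` of the hyperboloid `t² - ‖x‖² = 1`, the argument of
`arcosh` in `dh` is the Minkowski form of the lifts, and `T y` is the Lorentz boost sending the
lift of `0` to the lift of `y`. Concretely, write `s = br y` and `T y x = x + c • y`. Then
`⟪x, y⟫ = (c - br x) (s + 1)`, `br (T y x) = c (s + 1) - br x` and `‖y‖² = (s - 1) (s + 1)`,
and in these variables the invariance of the Minkowski form is a polynomial identity.
-/

open RealInnerProductSpace

theorem inner_add_smul_add_smul {E : Type*} [NormedAddCommGroup E] [InnerProductSpace ℝ E]
    (a b y : E) (c d : ℝ) :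
    ⟪a + c • y, b + d • y⟫ = ⟪a, b⟫ + d * ⟪a, y⟫ + c * ⟪b, y⟫ + c * d * ‖y‖ ^ 2 := by
  simp only [inner_add_left, inner_add_right, real_inner_smul_left, real_inner_smul_right,
    real_inner_self_eq_norm_sq, real_inner_comm b y]
  ring

section Hyperbolic

variable {n : ℕ}

theorem br_sq (x : EuclideanSpace ℝ (Fin n)) : br x ^ 2 = 1 + ‖x‖ ^ 2 :=
  Real.sq_sqrt (by positivity)

theorem br_pos (x : EuclideanSpace ℝ (Fin n)) : 0 < br x :=
  Real.sqrt_pos.2 (by positivity)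

theorem norm_le_br (x : EuclideanSpace ℝ (Fin n)) : ‖x‖ ≤ br x :=
  Real.le_sqrt_of_sq_le (by linarith)

theorem neg_inner_le_br_mul_br (x y : EuclideanSpace ℝ (Fin n)) : -⟪x, y⟫ ≤ br x * br y :=
  calc -⟪x, y⟫ ≤ ‖x‖ * ‖y‖ := (neg_le_abs _).trans (abs_real_inner_le_norm x y)
    _ ≤ br x * br y := mul_le_mul (norm_le_br x) (norm_le_br y) (norm_nonneg y) (br_pos x).le

noncomputable def translationCoeff (y x : EuclideanSpace ℝ (Fin n)) : ℝ :=
  br x + ⟪x, y⟫ / (br y + 1)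

theorem T_eq_add_translationCoeff_smul (y x : EuclideanSpace ℝ (Fin n)) :
    T y x = x + translationCoeff y x • y :=
  rfl

theorem inner_eq_translationCoeff (y x : EuclideanSpace ℝ (Fin n)) :
    ⟪x, y⟫ = (translationCoeff y x - br x) * (br y + 1) := by
  rw [translationCoeff, add_sub_cancel_left, div_mul_cancel₀]
  linarith [br_pos y]

theorem br_T (y x : EuclideanSpace ℝ (Fin n)) :
    br (T y x) = translationCoeff y x * (br y + 1) - br x := by
  have hsq : 1 + ‖T y x‖ ^ 2 = (translationCoeff y x * (br y + 1) - br x) ^ 2 := by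
    rw [← real_inner_self_eq_norm_sq, T_eq_add_translationCoeff_smul, inner_add_smul_add_smul,
      real_inner_self_eq_norm_sq, inner_eq_translationCoeff y x]
    linear_combination -translationCoeff y x ^ 2 * br_sq y - br_sq x
  have hnonneg : 0 ≤ translationCoeff y x * (br y + 1) - br x := by
    linarith [inner_eq_translationCoeff y x, neg_inner_le_br_mul_br x y]
  rw [br, hsq, Real.sqrt_sq hnonneg]

theorem br_mul_br_sub_inner_T (y a b : EuclideanSpace ℝ (Fin n)) :
    br (T y a) * br (T y b) - ⟪T y a, T y b⟫ = br a * br b - ⟪a, b⟫ := by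
  rw [br_T, br_T, T_eq_add_translationCoeff_smul, T_eq_add_translationCoeff_smul,
    inner_add_smul_add_smul, inner_eq_translationCoeff y a, inner_eq_translationCoeff y b]
  linear_combination translationCoeff y a * translationCoeff y b * br_sq y

end Hyperbolic

theorem T_preserves_dh {n : ℕ} (y a b : EuclideanSpace ℝ (Fin n)) :
    dh (T y a) (T y b) = dh a b := by
  rw [dh, dh, br_mul_br_sub_inner_T]
end

section
/- For n > 1, let L be a hyperbolic line in (ℝⁿ, d_h) not passing through 0. Then there exist linearly independent vectors a, b ∈ ℝⁿ with L = {sinh(t)·a + cosh(t)·b : t ∈ ℝ}, and for every real μ with |μ| > 1 the linear span of μ·a + b is a hyperbolic line through 0 disjoint from L; in particular there are infinitely many hyperbolic lines through 0 disjoint from L. -/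
def IsHypLine {n : ℕ} (L : Set (EuclideanSpace ℝ (Fin n))) : Prop :=
  ∃ γ : ℝ → EuclideanSpace ℝ (Fin n), (∀ s t, dh (γ s) (γ t) = |s - t|) ∧ L = Set.range γ

/-!
Lifting `x ↦ (√(1 + ‖x‖²), x)` puts `(ℝⁿ, d_h)` onto the upper sheet of the unit hyperboloid in
Minkowski space `ℝ × ℝⁿ`, and `cosh d_h` is the Minkowski product of the lifts. A geodesic `γ`
therefore lifts to a curve `X` with `⟨X s, X u⟩ = cosh (s - u)`, and this Gram matrix forces
`X t = sinh t • A + cosh t • B` with `A, B` Minkowski-orthonormal: the difference is lightlike and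
orthogonal to the timelike `X t`, hence zero. Projecting to `ℝⁿ` gives `L = {sinh t • a + cosh t • b}`.
If `a, b` were dependent, the plane of `A, B` would contain the time axis, whose intersection with
the hyperbola is the lift of `0`. Finally `c • (μ • a + b) = sinh t • a + cosh t • b` would force
`|sinh t| = |μ| cosh t > cosh t`.
-/

open Real RealInnerProductSpace

section

variable {E : Type*} [NormedAddCommGroup E] [InnerProductSpace ℝ E]

noncomputable def minkowskiForm : LinearMap.BilinForm ℝ (ℝ × E) :=
  (LinearMap.mul ℝ ℝ).compl₁₂ (LinearMap.fst ℝ ℝ E) (LinearMap.fst ℝ ℝ E) -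
    (innerₛₗ ℝ (E := E)).compl₁₂ (LinearMap.snd ℝ ℝ E) (LinearMap.snd ℝ ℝ E)

@[simp]
lemma minkowskiForm_apply (p q : ℝ × E) : minkowskiForm p q = p.1 * q.1 - ⟪p.2, q.2⟫ := rfl

lemma minkowskiForm_comm (p q : ℝ × E) : minkowskiForm p q = minkowskiForm q p := by
  simp only [minkowskiForm_apply, real_inner_comm, mul_comm]

lemma eq_zero_of_minkowskiForm_self_eq_zero {p q : ℝ × E} (hp : minkowskiForm p p = 0)
    (hpq : minkowskiForm p q = 0) (hq : 0 < minkowskiForm q q) : p = 0 := by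
  simp only [minkowskiForm_apply, real_inner_self_eq_norm_sq] at hp hpq hq
  have hcs : ⟪p.2, q.2⟫ ^ 2 ≤ ‖p.2‖ ^ 2 * ‖q.2‖ ^ 2 := by
    rw [← mul_pow, ← sq_abs]
    exact pow_le_pow_left₀ (abs_nonneg _) (abs_real_inner_le_norm _ _) 2
  rw [show ⟪p.2, q.2⟫ = p.1 * q.1 by linarith, show ‖p.2‖ ^ 2 = p.1 * p.1 by linarith] at hcs
  have hp1 : p.1 = 0 := by
    have : p.1 ^ 2 * (q.1 * q.1 - ‖q.2‖ ^ 2) ≤ 0 := by linear_combination hcs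
    exact pow_eq_zero_iff two_ne_zero |>.1 <|
      le_antisymm (nonpos_of_mul_nonpos_left this hq) (sq_nonneg _)
  have hp2 : ‖p.2‖ = 0 := by simpa [hp1] using hp
  exact Prod.ext hp1 (norm_eq_zero.1 hp2)

lemma exists_hyperbola_of_minkowskiForm_eq_cosh {X : ℝ → ℝ × E}
    (hX : ∀ s u, minkowskiForm (X s) (X u) = cosh (s - u)) :
    ∃ A B : ℝ × E, minkowskiForm A A = -1 ∧ minkowskiForm A B = 0 ∧ minkowskiForm B B = 1 ∧
      ∀ t, X t = sinh t • A + cosh t • B := by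
  have hs1 : sinh 1 ≠ 0 := (sinh_pos_iff.2 one_pos).ne'
  set A := (sinh 1)⁻¹ • (X 1 - cosh 1 • X 0)
  have hAv : ∀ v, minkowskiForm A v =
      (sinh 1)⁻¹ * (minkowskiForm (X 1) v - cosh 1 * minkowskiForm (X 0) v) := fun v => by
    simp only [A, map_sub, map_smul, LinearMap.sub_apply, LinearMap.smul_apply, smul_eq_mul]
  have hAX : ∀ t, minkowskiForm A (X t) = -sinh t := fun t => by
    rw [hAv, hX, hX, cosh_sub, zero_sub, cosh_neg]
    field_simp
    ring
  have hXA : ∀ t, minkowskiForm (X t) A = -sinh t := fun t => by rw [minkowskiForm_comm, hAX]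
  have hAA : minkowskiForm A A = -1 := by
    rw [hAv, hXA, hXA, sinh_zero, neg_zero, mul_zero, sub_zero, mul_neg, inv_mul_cancel₀ hs1]
  have hXX : ∀ t, minkowskiForm (X t) (X t) = 1 := fun t => by rw [hX, sub_self, cosh_zero]
  refine ⟨A, X 0, hAA, by rw [hAX, sinh_zero, neg_zero], hXX 0, fun t => ?_⟩
  set W := X t - (sinh t • A + cosh t • X 0)
  have hWX : minkowskiForm W (X t) = 0 := by
    simp only [W, map_sub, map_add, map_smul, LinearMap.sub_apply, LinearMap.add_apply,
      LinearMap.smul_apply, smul_eq_mul, hAX, hX, sub_self, zero_sub, cosh_neg, cosh_zero]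
    linear_combination -cosh_sq_sub_sinh_sq t
  have hWW : minkowskiForm W W = 0 := by
    simp only [W, map_sub, map_add, map_smul, LinearMap.sub_apply, LinearMap.add_apply,
      LinearMap.smul_apply, smul_eq_mul, hAX, hXA, hAA, hX, sub_self, sub_zero, zero_sub, cosh_neg,
      cosh_zero, sinh_zero]
    linear_combination -cosh_sq_sub_sinh_sq t
  exact sub_eq_zero.1 (eq_zero_of_minkowskiForm_self_eq_zero hWW hWX (by rw [hXX]; exact one_pos))

lemma linearIndependent_snd_of_hyperbola {A B : ℝ × E} (hAA : minkowskiForm A A = -1)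
    (hAB : minkowskiForm A B = 0) (hBB : minkowskiForm B B = 1)
    (h0 : ∀ τ, sinh τ • A.2 + cosh τ • B.2 ≠ 0) : LinearIndependent ℝ ![A.2, B.2] := by
  refine LinearIndependent.pair_iff.2 fun s t hst => ?_
  set v := s • A + t • B
  have hv2 : v.2 = 0 := hst
  have hBA : minkowskiForm B A = 0 := by rw [minkowskiForm_comm, hAB]
  have hvA : minkowskiForm v A = -s := by
    simp only [v, map_add, map_smul, LinearMap.add_apply, LinearMap.smul_apply, smul_eq_mul, hAA,
      hBA]
    ring
  have hvB : minkowskiForm v B = t := by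
    simp only [v, map_add, map_smul, LinearMap.add_apply, LinearMap.smul_apply, smul_eq_mul, hAB,
      hBB]
    ring
  have hv1sq : v.1 ^ 2 = t ^ 2 - s ^ 2 := by
    have hvv : minkowskiForm v v = v.1 ^ 2 := by simp [hv2, sq]
    rw [← hvv]
    simp only [v, map_add, map_smul, LinearMap.add_apply, LinearMap.smul_apply, smul_eq_mul, hAA,
      hAB, hBA, hBB]
    ring
  rcases eq_or_ne v.1 0 with hv1 | hv1
  · have hv : v = 0 := Prod.ext hv1 hv2
    rw [hv, map_zero, LinearMap.zero_apply] at hvA hvB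
    exact ⟨by linarith, hvB.symm⟩
  · -- `v` spans the time axis, and the hyperbola crosses it at `artanh (s / t)`
    exfalso
    have hst2 : s ^ 2 < t ^ 2 := by linarith [pow_pos (abs_pos.2 hv1) 2, sq_abs v.1]
    have ht : t ≠ 0 := by rintro rfl; nlinarith
    have hα : s / t ∈ Set.Ioo (-1) 1 := by
      have : |s / t| < 1 := by rw [abs_div, div_lt_one (abs_pos.2 ht)]; exact sq_lt_sq.1 hst2
      exact abs_lt.1 this
    apply h0 (artanh (s / t))
    rw [sinh_artanh hα, cosh_artanh hα]
    generalize √(1 - (s / t) ^ 2) = k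
    calc _ = (k⁻¹ * t⁻¹) • (s • A.2 + t • B.2) := by match_scalars <;> field_simp
      _ = 0 := by rw [hst, smul_zero]

def hyperbola (a b : E) : Set E := {p | ∃ t : ℝ, p = sinh t • a + cosh t • b}

lemma disjoint_span_hyperbola {a b : E} (hab : LinearIndependent ℝ ![a, b]) {μ : ℝ}
    (hμ : 1 < |μ|) : Disjoint (Submodule.span ℝ {μ • a + b} : Set E) (hyperbola a b) := by
  refine Set.disjoint_left.2 ?_
  rintro _ hx ⟨t, rfl⟩
  obtain ⟨c, hc⟩ := Submodule.mem_span_singleton.1 hx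
  obtain ⟨hsinh, hcosh⟩ := hab.eq_of_pair (s := c * μ) (t := c) (by rw [← hc]; module)
  have hμ2 : 1 < μ ^ 2 := one_lt_sq_iff_one_lt_abs μ |>.2 hμ
  have hsq : sinh t ^ 2 = cosh t ^ 2 * μ ^ 2 := by rw [← hsinh, ← hcosh]; ring
  nlinarith [cosh_sq_sub_sinh_sq t, cosh_pos t]

lemma span_smul_add_injective {a b : E} (hab : LinearIndependent ℝ ![a, b]) :
    Function.Injective fun μ : ℝ => (Submodule.span ℝ {μ • a + b} : Set E) := by
  intro μ μ' h
  have hmem : μ' • a + b ∈ (Submodule.span ℝ {μ • a + b} : Set E) := by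
    simp only at h
    rw [h]
    exact Submodule.mem_span_singleton_self _
  obtain ⟨c, hc⟩ := Submodule.mem_span_singleton.1 hmem
  obtain ⟨hμ, hc1⟩ := hab.eq_of_pair (s := c * μ) (t := c) (s' := μ') (t' := 1)
    (by rw [one_smul, ← hc]; module)
  rw [← hμ, hc1, one_mul]

end

section

variable {n : ℕ}

lemma one_add_norm_mul_norm_le_br_mul_br (x y : EuclideanSpace ℝ (Fin n)) :
    1 + ‖x‖ * ‖y‖ ≤ br x * br y := by
  rw [br, br, ← sqrt_mul (by positivity)]
  exact le_sqrt_of_sq_le (by nlinarith [sq_nonneg (‖x‖ - ‖y‖)])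

lemma cosh_dh (x y : EuclideanSpace ℝ (Fin n)) : cosh (dh x y) = br x * br y - ⟪x, y⟫ :=
  cosh_arcosh (by linarith [one_add_norm_mul_norm_le_br_mul_br x y, real_inner_le_norm x y])

lemma minkowskiForm_lift_of_isometry {γ : ℝ → EuclideanSpace ℝ (Fin n)}
    (hγ : ∀ s t, dh (γ s) (γ t) = |s - t|) (s t : ℝ) :
    minkowskiForm (br (γ s), γ s) (br (γ t), γ t) = cosh (s - t) := by
  rw [minkowskiForm_apply, ← cosh_dh, hγ, cosh_abs]

lemma dh_sinh_smul_sinh_smul {u : EuclideanSpace ℝ (Fin n)} (hu : ‖u‖ = 1) (s t : ℝ) :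
    dh (sinh s • u) (sinh t • u) = |s - t| := by
  have hbr : ∀ r, br (sinh r • u) = cosh r := fun r => by
    rw [br, norm_smul, hu, mul_one, norm_eq_abs, sq_abs, ← cosh_sq', sqrt_sq (cosh_pos r).le]
  rw [dh, hbr, hbr, real_inner_smul_left, real_inner_smul_right, real_inner_self_eq_norm_sq, hu,
    one_pow, mul_one, ← cosh_sub, ← cosh_abs]
  exact arcosh_cosh (abs_nonneg _)

lemma isHypLine_span_singleton {w : EuclideanSpace ℝ (Fin n)} (hw : w ≠ 0) :
    IsHypLine (Submodule.span ℝ {w} : Set (EuclideanSpace ℝ (Fin n))) := by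
  refine ⟨fun t => sinh t • (‖w‖⁻¹ • w), dh_sinh_smul_sinh_smul (norm_smul_inv_norm hw), ?_⟩
  rw [← Submodule.span_singleton_smul_eq (IsUnit.mk0 _ (inv_ne_zero (norm_ne_zero_iff.2 hw))) w]
  ext x
  simp only [SetLike.mem_coe, Submodule.mem_span_singleton, Set.mem_range]
  exact sinh_surjective.exists

end

theorem hyperbolic_parallels_general {n : ℕ} (L : Set (EuclideanSpace ℝ (Fin n)))
    (hL : IsHypLine L) (h0 : (0 : EuclideanSpace ℝ (Fin n)) ∉ L) :
    ∃ a b : EuclideanSpace ℝ (Fin n), LinearIndependent ℝ ![a, b] ∧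
      L = {p | ∃ t : ℝ, p = Real.sinh t • a + Real.cosh t • b} ∧
      (∀ μ : ℝ, 1 < |μ| →
        IsHypLine (Submodule.span ℝ {μ • a + b} : Set (EuclideanSpace ℝ (Fin n))) ∧
        Disjoint (Submodule.span ℝ {μ • a + b} : Set (EuclideanSpace ℝ (Fin n))) L) ∧
      {L' : Set (EuclideanSpace ℝ (Fin n)) |
        IsHypLine L' ∧ (0 : EuclideanSpace ℝ (Fin n)) ∈ L' ∧ Disjoint L' L}.Infinite := by
  obtain ⟨γ, hγ, rfl⟩ := hL
  obtain ⟨A, B, hAA, hAB, hBB, hX⟩ :=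
    exists_hyperbola_of_minkowskiForm_eq_cosh (minkowskiForm_lift_of_isometry hγ)
  have hγAB : ∀ t, γ t = sinh t • A.2 + cosh t • B.2 := fun t => congrArg Prod.snd (hX t)
  have hrange : Set.range γ = hyperbola A.2 B.2 :=
    Set.ext fun p => ⟨fun ⟨t, ht⟩ => ⟨t, ht ▸ hγAB t⟩, fun ⟨t, ht⟩ => ⟨t, (hγAB t).trans ht.symm⟩⟩
  have hab : LinearIndependent ℝ ![A.2, B.2] :=
    linearIndependent_snd_of_hyperbola hAA hAB hBB fun t ht => h0 ⟨t, (hγAB t).trans ht⟩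
  have hline (μ : ℝ) :
      IsHypLine (Submodule.span ℝ {μ • A.2 + B.2} : Set (EuclideanSpace ℝ (Fin n))) :=
    isHypLine_span_singleton fun h =>
      one_ne_zero (hab.eq_zero_of_pair (s := μ) (t := 1) (by rwa [one_smul])).2
  rw [hrange]
  refine ⟨A.2, B.2, hab, rfl, fun μ hμ => ⟨hline μ, disjoint_span_hyperbola hab hμ⟩, ?_⟩
  refine ((Set.Ioi_infinite 1).image (span_smul_add_injective hab).injOn).mono ?_
  rintro _ ⟨μ, hμ, rfl⟩
  exact ⟨hline μ, Submodule.zero_mem _,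
    disjoint_span_hyperbola hab (hμ.trans_le (le_abs_self μ))⟩

theorem hyperbolic_parallels {n : ℕ} (hn : 1 < n) (L : Set (EuclideanSpace ℝ (Fin n)))
    (hL : IsHypLine L) (h0 : (0 : EuclideanSpace ℝ (Fin n)) ∉ L) :
    ∃ a b : EuclideanSpace ℝ (Fin n), LinearIndependent ℝ ![a, b] ∧
      L = {p | ∃ t : ℝ, p = Real.sinh t • a + Real.cosh t • b} ∧
      (∀ μ : ℝ, 1 < |μ| →
        IsHypLine (Submodule.span ℝ {μ • a + b} : Set (EuclideanSpace ℝ (Fin n))) ∧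
        Disjoint (Submodule.span ℝ {μ • a + b} : Set (EuclideanSpace ℝ (Fin n))) L) ∧
      {L' : Set (EuclideanSpace ℝ (Fin n)) |
        IsHypLine L' ∧ (0 : EuclideanSpace ℝ (Fin n)) ∈ L' ∧ Disjoint L' L}.Infinite :=
  hyperbolic_parallels_general L hL h0
end
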